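/- arXiv:1112.4428 — 6 statements merged into one kernel-verified Lean document; each statement's English description precedes it below -/
import Mathlib

section
/- If nodes (i,t) and (j,t') are related by a bound guarantee, i.e., t + D(i,j) ≤ t', then (i,t) ⤳ (j,t') holds in every run r. -/
/-!
Every edge `i → j` forces `(i, s) ⤳ (j, s + b i j)`: either a message is sent at `(i, s)` and
arrives by `s + b i j`, or none is sent and timeout precedence applies. Chaining these steps along
a path of weight `D(i, j)` (the infimum is attained, `ℕ∞` being well-ordered) and finishing with
local precedence gives the theorem.
-/

/-- Syncausality in a run. -/
inductive Sync {P : Type*} (b : P → P → ℕ) (nbr : P → P → Prop)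
    (msg : P → ℕ → P → ℕ → Prop) (noMsg : P → ℕ → P → Prop) :
    P × ℕ → P × ℕ → Prop
  | loc {i : P} {t t' : ℕ} : t ≤ t' → Sync b nbr msg noMsg (i, t) (i, t')
  | message {i j : P} {t t' : ℕ} : msg i t j t' → Sync b nbr msg noMsg (i, t) (j, t')
  | timeout {i j : P} {t : ℕ} : nbr i j → noMsg i t j →
      Sync b nbr msg noMsg (i, t) (j, t + b i j)
  | trans {α β γ : P × ℕ} : Sync b nbr msg noMsg α β → Sync b nbr msg noMsg β γ →
      Sync b nbr msg noMsg α γ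

/-- `PathDist b nbr i j d` : there is a directed path from `i` to `j` of total weight `d`. -/
inductive PathDist {P : Type*} (b : P → P → ℕ) (nbr : P → P → Prop) : P → P → ℕ → Prop
  | refl (i : P) : PathDist b nbr i i 0
  | step {i j k : P} {d : ℕ} : nbr i j → PathDist b nbr j k d →
      PathDist b nbr i k (b i j + d)

/-- Transmission distance: the minimal weight of a directed path from `i` to `j`
(`⊤` if there is none). -/
noncomputable def transDist {P : Type*} (b : P → P → ℕ) (nbr : P → P → Prop)
    (i j : P) : ℕ∞ :=
  sInf {d : ℕ∞ | ∃ n : ℕ, PathDist b nbr i j n ∧ d = (n : ℕ∞)}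

section

variable {P : Type*} {b : P → P → ℕ} {nbr : P → P → Prop}
  {msg : P → ℕ → P → ℕ → Prop} {noMsg : P → ℕ → P → Prop}

theorem Sync.of_nbr
    (htotal : ∀ i j t, nbr i j → (∃ t', msg i t j t' ∧ t' ≤ t + b i j) ∨ noMsg i t j)
    {i j : P} (hij : nbr i j) (s : ℕ) :
    Sync b nbr msg noMsg (i, s) (j, s + b i j) := by
  rcases htotal i j s hij with ⟨s', hsent, harrive⟩ | hsilent
  · exact .trans (.message hsent) (.loc harrive)
  · exact .timeout hij hsilent

theorem Sync.of_pathDist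
    (htotal : ∀ i j t, nbr i j → (∃ t', msg i t j t' ∧ t' ≤ t + b i j) ∨ noMsg i t j)
    {i j : P} {n : ℕ} (hpath : PathDist b nbr i j n) (s : ℕ) :
    Sync b nbr msg noMsg (i, s) (j, s + n) := by
  induction hpath generalizing s with
  | refl i => exact .loc le_rfl
  | @step i k j d hik _ ih =>
    rw [← add_assoc]
    exact .trans (of_nbr htotal hik s) (ih _)

end

theorem exists_pathDist_eq_transDist {P : Type*} {b : P → P → ℕ} {nbr : P → P → Prop}
    {i j : P} (h : transDist b nbr i j ≠ ⊤) :
    ∃ n, PathDist b nbr i j n ∧ transDist b nbr i j = n := by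
  have hne : {d : ℕ∞ | ∃ n : ℕ, PathDist b nbr i j n ∧ d = n}.Nonempty := by
    by_contra hempty
    exact h (by rw [transDist, Set.not_nonempty_iff_eq_empty.mp hempty, sInf_empty])
  obtain ⟨n, hpath, hn⟩ := csInf_mem hne
  exact ⟨n, hpath, hn⟩

theorem stmt2_general {P : Type*} (b : P → P → ℕ) (nbr : P → P → Prop)
    (msg : P → ℕ → P → ℕ → Prop) (noMsg : P → ℕ → P → Prop)
    (htotal : ∀ i j t, nbr i j →
      (∃ t', msg i t j t' ∧ t' ≤ t + b i j) ∨ noMsg i t j)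
    (i j : P) (t t' : ℕ)
    (hguar : (t : ℕ∞) + transDist b nbr i j ≤ (t' : ℕ∞)) :
    Sync b nbr msg noMsg (i, t) (j, t') := by
  have hfinite : transDist b nbr i j ≠ ⊤ := by
    rintro htop
    simp [htop] at hguar
  obtain ⟨n, hpath, hn⟩ := exists_pathDist_eq_transDist hfinite
  have hle : t + n ≤ t' := by exact_mod_cast hn ▸ hguar
  exact .trans (.of_pathDist htotal hpath t) (.loc hle)

/-- If (i,t) ⇢ (j,t'), i.e. t + D(i,j) ≤ t', then (i,t) ⤳ (j,t') in every run. -/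
theorem stmt2 {P : Type*} [Finite P] (b : P → P → ℕ) (nbr : P → P → Prop)
    (msg : P → ℕ → P → ℕ → Prop) (noMsg : P → ℕ → P → Prop)
    (hb : ∀ i j, 1 ≤ b i j)
    (hmsg : ∀ i t j t', msg i t j t' → nbr i j ∧ t < t' ∧ t' ≤ t + b i j)
    (htotal : ∀ i j t, nbr i j →
      (∃ t', msg i t j t' ∧ t' ≤ t + b i j) ∨ noMsg i t j)
    (i j : P) (t t' : ℕ)
    (hguar : (t : ℕ∞) + transDist b nbr i j ≤ (t' : ℕ∞)) :
    Sync b nbr msg noMsg (i, t) (j, t') :=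
  stmt2_general b nbr msg noMsg htotal i j t t' hguar
end

section
/- If α ⤳ α' in run r, then there exists a node β bridging α and α', i.e., α ⤳ β ⇢ α' and for every node β', α ⤳ β' ⇢ β implies β' = β. -/
/-- β bridges α and α'. -/
def Bridges {P : Type*} (sync guar : P × ℕ → P × ℕ → Prop)
    (α α' β : P × ℕ) : Prop :=
  (sync α β ∧ guar β α') ∧ ∀ β', sync α β' → guar β' β → β' = β

/-- If α ⤳ α' then some node β bridges α and α'. -/
theorem stmt6 {P : Type*} (sync guar : P × ℕ → P × ℕ → Prop)
    (hsync_refl : ∀ α, sync α α)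
    (hsync_trans : ∀ α β γ, sync α β → sync β γ → sync α γ)
    (hsync_mono : ∀ (i j : P) (t t' : ℕ), sync (i, t) (j, t') →
      t ≤ t' ∧ (t = t' → i = j))
    (hguar_refl : ∀ α, guar α α)
    (hguar_trans : ∀ α β γ, guar α β → guar β γ → guar α γ)
    (hguar_mono : ∀ (i j : P) (t t' : ℕ), guar (i, t) (j, t') →
      t ≤ t' ∧ (t = t' → i = j))
    (hguar_sync : ∀ α β, guar α β → sync α β)
    (α α' : P × ℕ) (h : sync α α') :
    ∃ β, Bridges sync guar α α' β := by
  have key : ∀ (a b : P × ℕ), guar a b → a.2 ≤ b.2 ∧ (a.2 = b.2 → a = b) := by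
    rintro ⟨i, t⟩ ⟨j, t'⟩ hg
    obtain ⟨h1, h2⟩ := hguar_mono i j t t' hg
    exact ⟨h1, fun ht => by obtain rfl : t = t' := ht; simp [h2 rfl]⟩
  suffices H : ∀ n (α' : P × ℕ), α'.2 ≤ n → sync α α' → ∃ β, Bridges sync guar α α' β by
    exact H α'.2 α' le_rfl h
  intro n
  induction n using Nat.strong_induction_on with
  | _ n ih =>
    intro α' hle hsync
    by_cases hc : ∀ β', sync α β' → guar β' α' → β' = α'
    · exact ⟨α', ⟨hsync, hguar_refl α'⟩, hc⟩
    · push_neg at hc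
      obtain ⟨β', hs, hg, hne⟩ := hc
      have hlt : β'.2 < α'.2 := by
        obtain ⟨h1, h2⟩ := key β' α' hg
        exact lt_of_le_of_ne h1 (fun ht => hne (h2 ht))
      obtain ⟨β, ⟨hsb, hgb⟩, hmin⟩ := ih β'.2 (lt_of_lt_of_le hlt hle) β' le_rfl hs
      exact ⟨β, ⟨hsb, hguar_trans _ _ _ hgb hg⟩, hmin⟩
end

section
/- If β bridges α and α' and α ≠ β, then there exists β' with α ⤳ β' ⤳ β such that the step β' ⤳ β consists of a single early message receive (a message received strictly before its channel's upper bound). -/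
lemma aux10 {P : Type*} (b : P → P → ℕ) (nbr : P → P → Prop)
    (msg : P → ℕ → P → ℕ → Prop) (noMsg : P → ℕ → P → Prop)
    (guar : P × ℕ → P × ℕ → Prop)
    (hmsg : ∀ i t j t', msg i t j t' → nbr i j ∧ t < t' ∧ t' ≤ t + b i j)
    (hguar_loc : ∀ (i : P) (t t' : ℕ), t ≤ t' → guar (i, t) (i, t'))
    (hguar_timeout : ∀ (i j : P) (t : ℕ), nbr i j → guar (i, t) (j, t + b i j))
    {α β : P × ℕ} (h : Sync b nbr msg noMsg α β)
    (hmin : ∀ β', Sync b nbr msg noMsg α β' → guar β' β → β' = β)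
    (hne : α ≠ β) :
    ∃ (i : P) (t : ℕ) (j : P) (t'' : ℕ),
      β = (j, t'') ∧
      Sync b nbr msg noMsg α (i, t) ∧
      msg i t j t'' ∧ t'' < t + b i j := by
  induction h with
  | @loc i t t' hle =>
    exact absurd (hmin (i, t) (Sync.loc le_rfl) (hguar_loc i t t' hle)) hne
  | @message i j t t' hm =>
    obtain ⟨hn, hlt, hle⟩ := hmsg i t j t' hm
    rcases lt_or_eq_of_le hle with h1 | h1
    · exact ⟨i, t, j, t', rfl, Sync.loc le_rfl, hm, h1⟩
    · have := hmin (i, t) (Sync.loc le_rfl) (h1 ▸ hguar_timeout i j t hn)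
      have ht : t = t' := congrArg Prod.snd this
      omega
  | @timeout i j t hn hno =>
    exact absurd (hmin (i, t) (Sync.loc le_rfl) (hguar_timeout i j t hn)) hne
  | @trans x y z h1 h2 ih1 ih2 =>
    by_cases hyz : y = z
    · subst hyz; exact ih1 hmin hne
    · obtain ⟨i, t, j, t'', hz, hs, hm, hlt⟩ :=
        ih2 (fun β' hs hg => hmin β' (Sync.trans h1 hs) hg) hyz
      exact ⟨i, t, j, t'', hz, Sync.trans h1 hs, hm, hlt⟩

/-- If β bridges α and α' and α ≠ β, then there exists β' with
α ⤳ β' ⤳ β where the step β' ⤳ β is a single early message receive. -/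
theorem stmt10 {P : Type*} (b : P → P → ℕ) (nbr : P → P → Prop)
    (msg : P → ℕ → P → ℕ → Prop) (noMsg : P → ℕ → P → Prop)
    (guar : P × ℕ → P × ℕ → Prop)
    (hb : ∀ i j, 1 ≤ b i j)
    (hmsg : ∀ i t j t', msg i t j t' → nbr i j ∧ t < t' ∧ t' ≤ t + b i j)
    (hguar_loc : ∀ (i : P) (t t' : ℕ), t ≤ t' → guar (i, t) (i, t'))
    (hguar_timeout : ∀ (i j : P) (t : ℕ), nbr i j → guar (i, t) (j, t + b i j))
    (hguar_trans : ∀ α β γ, guar α β → guar β γ → guar α γ)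
    (α α' β : P × ℕ)
    (hbridge : Bridges (Sync b nbr msg noMsg) guar α α' β)
    (hne : α ≠ β) :
    ∃ (i : P) (t : ℕ) (j : P) (t'' : ℕ),
      β = (j, t'') ∧
      Sync b nbr msg noMsg α (i, t) ∧
      msg i t j t'' ∧ t'' < t + b i j := by
  exact aux10 b nbr msg noMsg guar hmsg hguar_loc hguar_timeout
    hbridge.1.1 hbridge.2 hne
end

section
/- In the asynchronous-delivery model (all channel bounds infinite), any centipede for ⟨i_0,...,i_k⟩ in (r,t..t') collapses to a Lamport message chain: there exist times t ≤ t_1 ≤ ... ≤ t_k ≤ t' with (i_0,t) ↠ (i_1,t_1) ↠ ... ↠ (i_k,t_k), where ↠ is Lamport's happened-before relation. -/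
/-- Lamport's happened-before relation in a run: generated by local precedence,
message precedence and transitivity. -/
inductive HB {P : Type*} (msg : P → ℕ → P → ℕ → Prop) : P × ℕ → P × ℕ → Prop
  | loc {i : P} {t t' : ℕ} : t ≤ t' → HB msg (i, t) (i, t')
  | message {i j : P} {t t' : ℕ} : msg i t j t' → HB msg (i, t) (j, t')
  | trans {α β γ : P × ℕ} : HB msg α β → HB msg β γ → HB msg α γ

/-- The bound guarantee in the asynchronous-delivery model (all bounds infinite):
(i,t) ⇢ (j,t') iff i = j and t ≤ t'. -/
def asyncGuar {P : Type*} (α β : P × ℕ) : Prop := α.1 = β.1 ∧ α.2 ≤ β.2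

/-- A centipede for ⟨i_0,…,i_k⟩ in (r, t..t') in the asynchronous model. -/
structure Centipede {P : Type*} (sync guar : P × ℕ → P × ℕ → Prop)
    (k : ℕ) (i : ℕ → P) (t t' : ℕ) (θ : ℕ → P × ℕ) : Prop where
  first : θ 0 = (i 0, t)
  last : θ k = (i k, t')
  chain : ∀ h < k, sync (θ h) (θ (h + 1))
  legs : ∀ h, 1 ≤ h → h ≤ k - 1 → guar (θ h) (i h, t')

lemma HB_time_le {P : Type*} {msg : P → ℕ → P → ℕ → Prop}
    (hmsg : ∀ i t j t', msg i t j t' → t < t') {α β : P × ℕ}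
    (h : HB msg α β) : α.2 ≤ β.2 := by
  induction h with
  | loc h => exact h
  | message h => exact (hmsg _ _ _ _ h).le
  | trans _ _ ih1 ih2 => exact ih1.trans ih2

/-- In the asynchronous-delivery model any centipede collapses to a Lamport
message chain: times t ≤ t_1 ≤ ⋯ ≤ t_k ≤ t' with
(i_0,t) ↠ (i_1,t_1) ↠ ⋯ ↠ (i_k,t_k). -/
theorem stmt11 {P : Type*} (msg : P → ℕ → P → ℕ → Prop)
    (hmsg : ∀ i t j t', msg i t j t' → t < t')
    (k : ℕ) (i : ℕ → P) (t t' : ℕ) (θ : ℕ → P × ℕ)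
    (hc : Centipede (HB msg) (asyncGuar) k i t t' θ) :
    ∃ ts : ℕ → ℕ, ts 0 = t ∧ (∀ h < k, ts h ≤ ts (h + 1)) ∧ ts k ≤ t' ∧
      ∀ h < k, HB msg (i h, ts h) (i (h + 1), ts (h + 1)) := by
  have hname : ∀ h ≤ k, (θ h).1 = i h := by
    intro h hh
    rcases Nat.eq_or_lt_of_le hh with rfl | hlt
    · rw [hc.last]
    · rcases Nat.eq_zero_or_pos h with rfl | hpos
      · rw [hc.first]
      · exact (hc.legs h hpos (Nat.le_sub_one_of_lt hlt)).1
  refine ⟨fun h => (θ h).2, by simp [hc.first], ?_, by simp [hc.last], ?_⟩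
  · intro h hk
    exact HB_time_le hmsg (hc.chain h hk)
  · intro h hk
    have e1 : (i h, (θ h).2) = θ h := by
      rw [← hname h hk.le]
    have e2 : (i (h+1), (θ (h+1)).2) = θ (h+1) := by
      rw [← hname (h+1) hk]
    rw [e1, e2]
    exact hc.chain h hk
end

section
/- In any system of runs with perfect recall where knowledge is defined by indistinguishability of local states, if at time t process i knows φ, and t' ≥ t, then at time t' process i knows that at time t it knew φ (TS4): ⊨ at_t(K_i φ) → at_{t'}(K_i at_t(K_i φ)). -/
/-- Knowledge via indistinguishability of local states:
`K L i φ r t` holds iff φ holds at every point whose i-local state equals i's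
local state at (r,t). -/
def K {R σ P : Type*} (L : P → R → ℕ → σ) (i : P) (φ : R → ℕ → Prop)
    (r : R) (t : ℕ) : Prop :=
  ∀ r' t', L i r' t' = L i r t → φ r' t'

/-- TS4: with perfect recall and global clocks in local states, if at time t
process i knows φ and t ≤ t', then at time t' process i knows that at time t
it knew φ:  ⊨ at_t(K_i φ) → at_{t'}(K_i at_t(K_i φ)). -/
theorem stmt14 {R σ P : Type*} (L : P → R → ℕ → σ)
    (htime : ∀ (i : P) (r r' : R) (t t' : ℕ), L i r t = L i r' t' → t = t')
    (hrecall : ∀ (i : P) (r r' : R) (t t'' : ℕ),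
      L i r t = L i r' t → t'' ≤ t → L i r t'' = L i r' t'')
    (i : P) (φ : R → ℕ → Prop) (t t' : ℕ) (h : t ≤ t') :
    ∀ r : R, K L i φ r t → K L i (fun r' _ => K L i φ r' t) r t' := by
  intro r hK r'' t'' heq
  have ht : t'' = t' := htime i r'' r t'' t' heq
  subst ht
  have hrec : L i r'' t = L i r t := hrecall i r'' r t'' t heq h
  intro r3 t3 h3
  exact hK r3 t3 (h3.trans hrec)
end

section
/- In the full-information protocol, if process i knows φ at (r,t) and (i,t) ⇢ (j,t') (bound guarantee), then already at (r,t) process i knows that at time t' process j will know that at time t process i knew φ: K_i(at_{t'}(K_j(at_t(K_i φ)))) holds at (r,t). -/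
/-- In fip, if K_i φ at (r,t) and (i,t) ⇢ (j,t'), then already at (r,t)
process i knows that at t' process j will know that at t process i knew φ:
K_i(at_{t'}(K_j(at_t(K_i φ)))). -/
theorem stmt17 {R σ P : Type*} (L : P → R → ℕ → σ)
    (syncR : R → P × ℕ → P × ℕ → Prop)
    (guar : P × ℕ → P × ℕ → Prop)
    (htime : ∀ (i : P) (r r' : R) (t t' : ℕ), L i r t = L i r' t' → t = t')
    (hgs : ∀ (r : R) (α β : P × ℕ), guar α β → syncR r α β)
    (hlem : ∀ (r : R) (i : P) (t : ℕ) (j : P) (t' : ℕ) (ψ : R → ℕ → Prop),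
      syncR r (i, t) (j, t') → K L i ψ r t →
      K L j (fun r' _ => K L i ψ r' t) r t')
    (i j : P) (t t' : ℕ) (φ : R → ℕ → Prop) (r : R)
    (hK : K L i φ r t) (hg : guar (i, t) (j, t')) :
    K L i (fun r' _ => K L j (fun r'' _ => K L i φ r'' t) r' t') r t := by
  intro r₂ t₂ h₂
  have ht : t₂ = t := htime i r₂ r t₂ t h₂
  subst ht
  have hK₂ : K L i φ r₂ t₂ := fun r₃ t₃ h₃ => hK r₃ t₃ (h₃.trans h₂)
  exact hlem r₂ i t₂ j t' φ (hgs r₂ _ _ hg) hK₂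
end
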